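/- If F and G are both GCD-morphic sequences, their pointwise product need not be GCD-morphic; however, if F = ∏ G_{c_i,i} and G = ∏ G_{d_i,i} with both c and d satisfying (C1) and additionally gcd(c(n)·d(n), c(k)·d(k)) = 1 whenever k < n and gcd(n,k) ≠ k, then the pointwise product F·G is GCD-morphic. -/

import Mathlib

/-!
Write `P_e n = ∏_{j ∣ n} e j`. For `g = gcd n m`, both `P_e n` and `P_e m` split off the common
factor `P_e g`; the remaining factors come from divisors `j ∣ n`, `k ∣ m` not dividing `g`, and such
`j`, `k` never divide one another, so (C1) makes the two cofactors coprime. Hence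
`gcd (P_e n) (P_e m) = P_e g`. Finally `F n * G n = P_{cd} n`, and the pointwise product `cd`
satisfies (C1) by hypothesis.
-/

def IsGCDMorphic (F : ℕ → ℕ) : Prop :=
  ∀ n m, 0 < n → 0 < m → Nat.gcd (F n) (F m) = F (Nat.gcd n m)

namespace Nat

theorem coprime_of_not_dvd_of_not_dvd {e : ℕ → ℕ}
    (he : ∀ k n, 1 ≤ k → k < n → Nat.gcd n k ≠ k → Nat.gcd (e n) (e k) = 1)
    {j k : ℕ} (hj : 0 < j) (hk : 0 < k) (hjk : ¬ j ∣ k) (hkj : ¬ k ∣ j) :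
    Coprime (e j) (e k) := by
  rcases lt_trichotomy j k with hlt | rfl | hlt
  · exact Coprime.symm (he j k hj hlt (mt Nat.gcd_eq_right_iff_dvd.mp hjk))
  · exact absurd dvd_rfl hjk
  · exact he k j hk hlt (mt Nat.gcd_eq_right_iff_dvd.mp hkj)

theorem not_dvd_of_not_dvd_gcd {j k n m : ℕ} (hjn : j ∣ n) (hkm : k ∣ m)
    (hj : ¬ j ∣ Nat.gcd n m) : ¬ j ∣ k :=
  fun hjk => hj (Nat.dvd_gcd hjn (hjk.trans hkm))

theorem gcd_prod_divisors {e : ℕ → ℕ}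
    (he : ∀ j k, 0 < j → 0 < k → ¬ j ∣ k → ¬ k ∣ j → Coprime (e j) (e k))
    {n m : ℕ} (hn : n ≠ 0) (hm : m ≠ 0) :
    Nat.gcd (∏ j ∈ n.divisors, e j) (∏ j ∈ m.divisors, e j) =
      ∏ j ∈ (Nat.gcd n m).divisors, e j := by
  set g := Nat.gcd n m
  have hg : g ≠ 0 := Nat.gcd_ne_zero_left hn
  have mem_cofactor {j l : ℕ} (hl : l ≠ 0) (h : j ∈ l.divisors \ g.divisors) :
      0 < j ∧ j ∣ l ∧ ¬ j ∣ g := by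
    simp only [Finset.mem_sdiff, Nat.mem_divisors, not_and] at h
    exact ⟨Nat.pos_of_dvd_of_pos h.1.1 (Nat.pos_of_ne_zero hl), h.1.1, fun hjg => h.2 hjg hg⟩
  have hcop :
      Coprime (∏ j ∈ n.divisors \ g.divisors, e j) (∏ k ∈ m.divisors \ g.divisors, e k) := by
    refine Coprime.prod_left fun j hj => Coprime.prod_right fun k hk => ?_
    obtain ⟨hj0, hjn, hjg⟩ := mem_cofactor hn hj
    obtain ⟨hk0, hkm, hkg⟩ := mem_cofactor hm hk
    exact he j k hj0 hk0 (not_dvd_of_not_dvd_gcd hjn hkm hjg)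
      (not_dvd_of_not_dvd_gcd hkm hjn (Nat.gcd_comm n m ▸ hkg))
  rw [← Finset.prod_sdiff (Nat.divisors_subset_of_dvd hn (Nat.gcd_dvd_left n m)),
    ← Finset.prod_sdiff (Nat.divisors_subset_of_dvd hm (Nat.gcd_dvd_right n m)),
    Nat.gcd_mul_right, hcop, one_mul]

theorem isGCDMorphic_prod_divisors {e : ℕ → ℕ}
    (he : ∀ k n, 1 ≤ k → k < n → Nat.gcd n k ≠ k → Nat.gcd (e n) (e k) = 1) :
    IsGCDMorphic fun n => ∏ j ∈ n.divisors, e j := fun _ _ hn hm =>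
  gcd_prod_divisors (fun _ _ hj hk => coprime_of_not_dvd_of_not_dvd he hj hk)
    hn.ne' hm.ne'

end Nat

theorem product_gcd_morphic_general (c d : ℕ → ℕ)
    (hmixed : ∀ k n, 1 ≤ k → k < n → Nat.gcd n k ≠ k →
      Nat.gcd (c n * d n) (c k * d k) = 1)
    (F G : ℕ → ℕ)
    (hF : ∀ n, F n = ∏ j ∈ n.divisors, c j)
    (hG : ∀ n, G n = ∏ j ∈ n.divisors, d j) :
    ∀ n m, 1 ≤ n → 1 ≤ m →
      Nat.gcd (F n * G n) (F m * G m) = F (Nat.gcd n m) * G (Nat.gcd n m) := by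
  have hFG : (fun n => F n * G n) = fun n => ∏ j ∈ n.divisors, c j * d j := by
    funext n
    rw [hF, hG, Finset.prod_mul_distrib]
  have h := Nat.isGCDMorphic_prod_divisors hmixed
  rwa [← hFG] at h

theorem product_gcd_morphic (c d : ℕ → ℕ)
    (hcpos : ∀ j, 1 ≤ j → 1 ≤ c j) (hdpos : ∀ j, 1 ≤ j → 1 ≤ d j)
    (hC1c : ∀ k n, 1 ≤ k → k < n → Nat.gcd n k ≠ k → Nat.gcd (c n) (c k) = 1)
    (hC1d : ∀ k n, 1 ≤ k → k < n → Nat.gcd n k ≠ k → Nat.gcd (d n) (d k) = 1)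
    (hmixed : ∀ k n, 1 ≤ k → k < n → Nat.gcd n k ≠ k →
      Nat.gcd (c n * d n) (c k * d k) = 1)
    (F G : ℕ → ℕ)
    (hF : ∀ n, F n = ∏ j ∈ n.divisors, c j)
    (hG : ∀ n, G n = ∏ j ∈ n.divisors, d j) :
    ∀ n m, 1 ≤ n → 1 ≤ m →
      Nat.gcd (F n * G n) (F m * G m) = F (Nat.gcd n m) * G (Nat.gcd n m) :=
  product_gcd_morphic_general c d hmixed F G hF hG
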